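/- If the weights satisfy wₙ ≥ 0 for all n and wₙ does not tend to 0, and x ∈ [0,1] \ D, then the subdifferential of T_w at x is empty. -/

import Mathlib

open Filter Topology

/-- The (viscosity/Fréchet) subdifferential of `f : ℝ → ℝ`, relative to the domain `s`,
at the point `x`: the set of `c` with
`liminf_{h → 0, x + h ∈ s} (f (x + h) - f x - c * h) / |h| ≥ 0`. -/
def subdifferentialWithin (f : ℝ → ℝ) (s : Set ℝ) (x : ℝ) : Set ℝ :=
  {c | ∀ ε > (0 : ℝ), ∀ᶠ h in 𝓝[≠] (0 : ℝ), x + h ∈ s → -ε ≤ (f (x + h) - f x - c * h) / |h|}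

/-- The superdifferential `∂⁺f(x) = -∂(-f)(x)`. -/
def superdifferentialWithin (f : ℝ → ℝ) (s : Set ℝ) (x : ℝ) : Set ℝ :=
  {c | -c ∈ subdifferentialWithin (fun y => -f y) s x}

/-- The set of midpoints of the connected components of the complement of `s` (the
bounded components being the open intervals between consecutive points of `s`). -/
def midpoints (s : Set ℝ) : Set ℝ :=
  {m | ∃ a ∈ s, ∃ b ∈ s, a < b ∧ Set.Ioo a b ∩ s = ∅ ∧ m = (a + b) / 2}

/-- Existence of the gap of a finite set around a point not in the set. -/
private lemma gap_exists {s : Set ℝ} (hfin : s.Finite) (h0 : (0:ℝ) ∈ s) (h1 : (1:ℝ) ∈ s)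
    {z : ℝ} (hz0 : 0 ≤ z) (hz1 : z ≤ 1) (hzs : z ∉ s) :
    ∃ A ∈ s, ∃ B ∈ s, A < z ∧ z < B ∧ Set.Ioo A B ∩ s = ∅ := by
  classical
  have hz0' : 0 < z := lt_of_le_of_ne hz0 (by rintro rfl; exact hzs h0)
  set F := hfin.toFinset with hF
  have hFA : (F.filter (fun y => y < z)).Nonempty :=
    ⟨0, by simp [hF, Finset.mem_filter, hfin.mem_toFinset, h0, hz0']⟩
  have hz1'' : z < 1 := lt_of_le_of_ne hz1 (by rintro rfl; exact hzs h1)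
  have hFB : (F.filter (fun y => z < y)).Nonempty :=
    ⟨1, by simp [hF, Finset.mem_filter, hfin.mem_toFinset, h1, hz1'']⟩
  set A := (F.filter (fun y => y < z)).max' hFA with hAdef
  set B := (F.filter (fun y => z < y)).min' hFB with hBdef
  have hA : A ∈ s ∧ A < z := by
    have h := (F.filter (fun y => y < z)).max'_mem hFA
    rw [Finset.mem_filter, hfin.mem_toFinset] at h
    exact h
  have hB : B ∈ s ∧ z < B := by
    have h := (F.filter (fun y => z < y)).min'_mem hFB
    rw [Finset.mem_filter, hfin.mem_toFinset] at h
    exact h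
  refine ⟨A, hA.1, B, hB.1, hA.2, hB.2, ?_⟩
  rw [Set.eq_empty_iff_forall_notMem]
  rintro y ⟨⟨hAy, hyB⟩, hys⟩
  rcases lt_trichotomy y z with h | h | h
  · have : y ≤ A := Finset.le_max' _ y (by simp [hF, Finset.mem_filter, hfin.mem_toFinset, hys, h])
    linarith
  · exact hzs (h ▸ hys)
  · have : B ≤ y := Finset.min'_le _ y (by simp [hF, Finset.mem_filter, hfin.mem_toFinset, hys, h])
    linarith

/-- Chord-slope inequality (concavity) for the distance function to a finite set,
on an interval disjoint from the set. -/
private lemma chord_ineq {s : Set ℝ} (hfin : s.Finite) (hne : s.Nonempty) {a x b : ℝ}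
    (hax : a < x) (hxb : x < b) (hdisj : Set.Ioo a b ∩ s = ∅) :
    (Metric.infDist b s - Metric.infDist x s) * (x - a)
      ≤ (Metric.infDist x s - Metric.infDist a s) * (b - x) := by
  obtain ⟨y, hy, hxy⟩ := hfin.isCompact.exists_infDist_eq_dist hne x
  have hyn : y ∉ Set.Ioo a b := fun h =>
    (Set.eq_empty_iff_forall_notMem.mp hdisj y) ⟨h, hy⟩
  have hnb : Metric.infDist b s ≤ Metric.infDist x s + (b - x) := by
    have := Metric.infDist_le_infDist_add_dist (x := b) (y := x) (s := s)
    rw [Real.dist_eq, abs_of_pos (by linarith)] at this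
    linarith
  have hna : Metric.infDist a s ≤ Metric.infDist x s + (x - a) := by
    have := Metric.infDist_le_infDist_add_dist (x := a) (y := x) (s := s)
    rw [Real.dist_eq, abs_of_neg (by linarith : a - x < 0)] at this
    linarith
  rcases le_or_gt y a with hya | hya
  · -- y ≤ a
    have h1 : Metric.infDist x s = x - y := by
      rw [hxy, Real.dist_eq, abs_of_pos (by linarith)]
    have h2 : Metric.infDist a s ≤ a - y := by
      have h3 := Metric.infDist_le_dist_of_mem (x := a) hy
      rw [Real.dist_eq, abs_of_nonneg (by linarith)] at h3
      linarith
    nlinarith [Metric.infDist_nonneg (s := s) (x := a)]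
  · -- b ≤ y
    have hby : b ≤ y := by
      by_contra hby'
      exact hyn ⟨hya, lt_of_not_ge hby'⟩
    have h1 : Metric.infDist x s = y - x := by
      rw [hxy, Real.dist_eq, abs_of_neg (by linarith : x - y < 0)]; ring
    have h2 : Metric.infDist b s ≤ y - b := by
      have h3 := Metric.infDist_le_dist_of_mem (x := b) hy
      rw [Real.dist_eq, abs_of_nonpos (by linarith)] at h3
      linarith
    nlinarith [Metric.infDist_nonneg (s := s) (x := b)]

set_option maxHeartbeats 1000000 in
theorem stmt7
(D : ℕ → Set ℝ) (α : ℕ → ℝ) (ρ : ℝ) (w : ℕ → ℝ)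
    (hD0 : (0 : ℝ) ∈ D 0) (hD1 : (1 : ℝ) ∈ D 0)
    (hDsub : ∀ n, D n ⊆ Set.Icc 0 1)
    (hDfin : ∀ n, (D n).Finite)
    (hDmono : ∀ n, D n ⊆ D (n + 1))
    (hρ : ρ ∈ Set.Ioc (0 : ℝ) 1)
    (hα : Summable α)
    (hgapU : ∀ n, ∀ a ∈ D n, ∀ b ∈ D n, a < b → Set.Ioo a b ∩ D n = ∅ → b - a ≤ α n)
    (hgapL : ∀ n, ∀ a ∈ D n, ∀ b ∈ D n, a < b → ρ * α n ≤ b - a)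
    (hwα : Summable (fun n => |w n * α n|))
    (hwpos : ∀ n, 0 ≤ w n) (hwc0 : ¬ Tendsto w atTop (𝓝 0))
    (x : ℝ) (hx : x ∈ Set.Icc (0 : ℝ) 1) (hxD : x ∉ ⋃ n, D n) :
    subdifferentialWithin (fun z => ∑' n : ℕ, w n * Metric.infDist z (D n))
        (Set.Icc 0 1) x = ∅ := by
  classical
  -- basic structure of the sets D n
  have hchain : ∀ m n : ℕ, m ≤ n → D m ⊆ D n := by
    intro m n hmn
    induction hmn with
    | refl => exact subset_rfl
    | step h ih => exact ih.trans (hDmono _)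
  have h0m : ∀ m, (0:ℝ) ∈ D m := fun m => hchain 0 m (Nat.zero_le m) hD0
  have h1m : ∀ m, (1:ℝ) ∈ D m := fun m => hchain 0 m (Nat.zero_le m) hD1
  have hneD : ∀ m, (D m).Nonempty := fun m => ⟨0, h0m m⟩
  have hxDm : ∀ m, x ∉ D m := fun m hmem => hxD (Set.mem_iUnion.mpr ⟨m, hmem⟩)
  -- gap lemma with length bound
  have hgap : ∀ m, ∀ z : ℝ, 0 ≤ z → z ≤ 1 → z ∉ D m →
      ∃ A ∈ D m, ∃ B ∈ D m, A < z ∧ z < B ∧ Set.Ioo A B ∩ D m = ∅ ∧ B - A ≤ α m := by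
    intro m z h0 h1 hzs
    obtain ⟨A, hA, B, hB, hAz, hzB, hdisj⟩ :=
      gap_exists (hDfin m) (h0m m) (h1m m) h0 h1 hzs
    exact ⟨A, hA, B, hB, hAz, hzB, hdisj, hgapU m A hA B hB (hAz.trans hzB) hdisj⟩
  -- positivity of α
  have hαpos : ∀ m, 0 < α m := by
    intro m
    obtain ⟨A, hA, B, hB, hAz, hzB, _, hlen⟩ := hgap m x hx.1 hx.2 (hxDm m)
    linarith
  -- the distance function is bounded by α on [0,1]
  have hbound : ∀ m, ∀ z : ℝ, 0 ≤ z → z ≤ 1 → Metric.infDist z (D m) ≤ α m := by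
    intro m z h0 h1
    by_cases hzs : z ∈ D m
    · rw [Metric.infDist_zero_of_mem hzs]; exact (hαpos m).le
    · obtain ⟨A, hA, B, hB, hAz, hzB, _, hlen⟩ := hgap m z h0 h1 hzs
      have := Metric.infDist_le_dist_of_mem (x := z) hA
      rw [Real.dist_eq, abs_of_pos (by linarith)] at this
      linarith
  -- summability of the series at any point of [0,1]
  have hsumm : ∀ z : ℝ, 0 ≤ z → z ≤ 1 →
      Summable (fun m => w m * Metric.infDist z (D m)) := by
    intro z h0 h1
    apply Summable.of_nonneg_of_le
      (fun m => mul_nonneg (hwpos m) Metric.infDist_nonneg)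
      (fun m => ?_) hwα
    calc w m * Metric.infDist z (D m) ≤ w m * α m := by
          exact mul_le_mul_of_nonneg_left (hbound m z h0 h1) (hwpos m)
      _ ≤ |w m * α m| := le_abs_self _
  -- extract δ with w n ≥ δ frequently
  have hδ : ∃ δ > (0:ℝ), ∀ N, ∃ n ≥ N, δ ≤ w n := by
    by_contra hcon
    push_neg at hcon
    apply hwc0
    rw [Metric.tendsto_atTop]
    intro ε hε
    obtain ⟨N, hN⟩ := hcon (ε/2) (by linarith)
    refine ⟨N, fun n hn => ?_⟩
    rw [Real.dist_eq, sub_zero, abs_of_nonneg (hwpos n)]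
    have := hN n hn
    linarith
  obtain ⟨δ, hδpos, hfreq⟩ := hδ
  -- start the contradiction
  rw [Set.eq_empty_iff_forall_notMem]
  intro c hc
  have hev := hc (δ/4) (by positivity)
  rw [eventually_nhdsWithin_iff, Metric.eventually_nhds_iff] at hev
  obtain ⟨r, hr, hball⟩ := hev
  -- choose n with w n ≥ δ and α n < r
  have hα0 := hα.tendsto_atTop_zero
  rw [Metric.tendsto_atTop] at hα0
  obtain ⟨N, hN⟩ := hα0 r hr
  obtain ⟨n, hnN, hwn⟩ := hfreq N
  have hαr : α n < r := by
    have := hN n hnN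
    rw [Real.dist_eq, sub_zero] at this
    exact lt_of_le_of_lt (le_abs_self _) this
  -- the gap of D n around x
  obtain ⟨a, haD, b, hbD, hax, hxb, hdisj, hlen⟩ := hgap n x hx.1 hx.2 (hxDm n)
  have ha01 := hDsub n haD
  have hb01 := hDsub n hbD
  set u : ℝ := x - a with hu
  set v : ℝ := b - x with hv
  have hupos : 0 < u := by simp [hu]; linarith
  have hvpos : 0 < v := by simp [hv]; linarith
  -- lower bound on infDist x (D n)
  have hgx : u * v ≤ Metric.infDist x (D n) * (u + v) := by
    have hmin : min u v ≤ Metric.infDist x (D n) := by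
      obtain ⟨y, hy, hxy⟩ := (hDfin n).isCompact.exists_infDist_eq_dist (hneD n) x
      have hyn : y ∉ Set.Ioo a b := fun h =>
        (Set.eq_empty_iff_forall_notMem.mp hdisj y) ⟨h, hy⟩
      rw [hxy, Real.dist_eq]
      rcases le_or_gt y a with h | h
      · rw [abs_of_pos (by linarith)]
        exact le_trans (min_le_left _ _) (by simp only [hu]; linarith)
      · have hby : b ≤ y := by
          by_contra hby'
          exact hyn ⟨h, lt_of_not_ge hby'⟩
        rw [abs_of_neg (by linarith : x - y < 0)]
        exact le_trans (min_le_right _ _) (by simp only [hv]; linarith)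
    rcases min_cases u v with ⟨hmeq, _⟩ | ⟨hmeq, _⟩ <;> rw [hmeq] at hmin <;> nlinarith
  -- values of the sum at a and b
  have fa_eq : (∑' m, w m * Metric.infDist a (D m))
      = ∑ m ∈ Finset.range n, w m * Metric.infDist a (D m) := by
    apply tsum_eq_sum
    intro m hm
    have hmem : a ∈ D m := hchain n m (Nat.le_of_not_lt (by simpa using hm)) haD
    simp [Metric.infDist_zero_of_mem hmem]
  have fb_eq : (∑' m, w m * Metric.infDist b (D m))
      = ∑ m ∈ Finset.range n, w m * Metric.infDist b (D m) := by
    apply tsum_eq_sum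
    intro m hm
    have hmem : b ∈ D m := hchain n m (Nat.le_of_not_lt (by simpa using hm)) hbD
    simp [Metric.infDist_zero_of_mem hmem]
  -- lower bound of the sum at x
  have fx_ge : (∑ m ∈ Finset.range n, w m * Metric.infDist x (D m))
      + w n * Metric.infDist x (D n) ≤ ∑' m, w m * Metric.infDist x (D m) := by
    have h1 : (∑ m ∈ Finset.range (n+1), w m * Metric.infDist x (D m))
        ≤ ∑' m, w m * Metric.infDist x (D m) :=
      Summable.sum_le_tsum _ (fun m _ => mul_nonneg (hwpos m) Metric.infDist_nonneg)
        (hsumm x hx.1 hx.2)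
    rwa [Finset.sum_range_succ] at h1
  set Sa := ∑ m ∈ Finset.range n, w m * Metric.infDist a (D m) with hSa
  set Sb := ∑ m ∈ Finset.range n, w m * Metric.infDist b (D m) with hSb
  set Sx := ∑ m ∈ Finset.range n, w m * Metric.infDist x (D m) with hSx
  set fx := ∑' m, w m * Metric.infDist x (D m) with hfx
  -- concavity of the partial sum
  have hconc : (Sb - Sx) * u - (Sx - Sa) * v ≤ 0 := by
    have hterm : ∀ m ∈ Finset.range n,
        (w m * Metric.infDist b (D m) - w m * Metric.infDist x (D m)) * u
          - (w m * Metric.infDist x (D m) - w m * Metric.infDist a (D m)) * v ≤ 0 := by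
      intro m hm
      have hdisj' : Set.Ioo a b ∩ D m = ∅ := by
        rw [Set.eq_empty_iff_forall_notMem]
        rintro y ⟨hy1, hy2⟩
        exact (Set.eq_empty_iff_forall_notMem.mp hdisj y)
          ⟨hy1, hchain m n (Finset.mem_range.mp hm).le hy2⟩
      have hch := chord_ineq (hDfin m) (hneD m) hax hxb hdisj'
      rw [← hu, ← hv] at hch
      have hw := hwpos m
      nlinarith
    have hsum := Finset.sum_nonpos hterm
    have heq : (∑ m ∈ Finset.range n,
        ((w m * Metric.infDist b (D m) - w m * Metric.infDist x (D m)) * u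
          - (w m * Metric.infDist x (D m) - w m * Metric.infDist a (D m)) * v))
        = (Sb - Sx) * u - (Sx - Sa) * v := by
      simp only [hSa, hSb, hSx, sub_mul, Finset.sum_sub_distrib, Finset.sum_mul]
    rw [heq] at hsum
    exact hsum
  -- use the subdifferential inequality at a and b
  have hane : (a - x) ≠ 0 := by intro h; linarith
  have hbne : (b - x) ≠ 0 := by intro h; linarith
  have ineqA := hball (y := a - x)
    (by rw [Real.dist_eq, sub_zero, abs_of_neg (by linarith : a - x < 0)]; linarith)
    (by simpa using hane) (by rw [show x + (a - x) = a by ring]; exact ha01)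
  have ineqB := hball (y := b - x)
    (by rw [Real.dist_eq, sub_zero, abs_of_pos (by linarith : 0 < b - x)]; linarith)
    (by simpa using hbne) (by rw [show x + (b - x) = b by ring]; exact hb01)
  rw [show x + (a - x) = a by ring] at ineqA
  rw [show x + (b - x) = b by ring] at ineqB
  simp only [] at ineqA ineqB
  rw [le_div_iff₀ (by rw [abs_of_neg (by linarith : a - x < 0)]; linarith)] at ineqA
  rw [le_div_iff₀ (by rw [abs_of_pos (by linarith : 0 < b - x)]; linarith)] at ineqB
  rw [abs_of_neg (by linarith : a - x < 0)] at ineqA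
  rw [abs_of_pos (by linarith : 0 < b - x)] at ineqB
  rw [fa_eq] at ineqA
  rw [fb_eq] at ineqB
  -- ineqA : -(δ/4) * -(a - x) ≤ Sa - fx - c * (a - x)
  -- ineqB : -(δ/4) * (b - x) ≤ Sb - fx - c * (b - x)
  -- combine everything
  have key1 : (Sb - fx) * u - (fx - Sa) * v ≥ -(δ/2) * (u * v) := by
    have hA' : -(δ/4) * u ≤ Sa - fx + c * u := by
      have he : -(a - x) = u := by rw [hu]; ring
      rw [he] at ineqA; linarith [ineqA]
    have hB' : -(δ/4) * v ≤ Sb - fx - c * v := by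
      have he : (b - x) = v := hv.symm
      rw [he] at ineqB; linarith [ineqB]
    nlinarith [mul_le_mul_of_nonneg_right hA' hvpos.le,
      mul_le_mul_of_nonneg_right hB' hupos.le]
  have key2 : (Sb - fx) * u - (fx - Sa) * v ≤ -δ * (u * v) := by
    have hfxge : Sx + w n * Metric.infDist x (D n) ≤ fx := fx_ge
    have hG : δ * (u * v) ≤ w n * Metric.infDist x (D n) * (u + v) := by
      have h1 : δ * (u * v) ≤ w n * (u * v) :=
        mul_le_mul_of_nonneg_right hwn (by positivity)
      have h2 : w n * (u * v) ≤ w n * (Metric.infDist x (D n) * (u + v)) :=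
        mul_le_mul_of_nonneg_left hgx (hwpos n)
      calc δ * (u * v) ≤ w n * (u * v) := h1
        _ ≤ w n * (Metric.infDist x (D n) * (u + v)) := h2
        _ = w n * Metric.infDist x (D n) * (u + v) := by ring
    nlinarith [mul_le_mul_of_nonneg_right hfxge (by linarith : (0:ℝ) ≤ u + v), hG, hconc]
  have hcontra : -(δ/2) * (u * v) ≤ -δ * (u * v) := le_trans key1 key2
  have huv : 0 < u * v := mul_pos hupos hvpos
  have hd2 : 0 < (δ/2) * (u * v) := mul_pos (by linarith) huv
  linarith
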